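/- Let h : ℕ → ℕ be strictly increasing with h(i) ≥ 1, let b ≥ 2 be a base, and suppose P_i does not divide b for some i ≤ j. Then α_j = Σ_{i=0}^j P_i^(-h(i)) does not have a finite base-b expansion, i.e., b^n · α_j is not an integer for any n. -/

import Mathlib

/-!
Let `p = P i`. In `α_j` the term `p ^ (-h i)` has `p`-adic valuation `-h i < 0`, while every
other term is a power of a different prime and so has valuation `0`; by the ultrametric
inequality `α_j` has valuation `-h i`. Multiplying by `b ^ n` does not change this since
`p ∤ b`, but an integer has nonnegative valuation.
-/

/-- `P i` is the `i`-th prime number (`P 0 = 2`). -/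
noncomputable def P (i : ℕ) : ℕ := Nat.nth Nat.Prime i

lemma P_prime (i : ℕ) : (P i).Prime := Nat.prime_nth_prime i

lemma P_injective : Function.Injective P :=
  (Nat.nth_strictMono Nat.infinite_setOfPred_prime).injective

lemma padicValRat_P_self (i : ℕ) : padicValRat (P i) (P i) = 1 :=
  padicValRat.self (P_prime i).one_lt

lemma padicValRat_P_of_ne {i k : ℕ} (hki : k ≠ i) : padicValRat (P i) (P k) = 0 := by
  have hndvd : ¬ P i ∣ P k := fun hdvd =>
    hki (P_injective ((Nat.prime_dvd_prime_iff_eq (P_prime i) (P_prime k)).mp hdvd).symm)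
  rw [padicValRat.of_nat, padicValNat.eq_zero_of_not_dvd hndvd, Nat.cast_zero]

lemma padicValRat_intCast_nonneg (p : ℕ) (z : ℤ) : 0 ≤ padicValRat p z := by
  rw [padicValRat.of_int]
  exact Int.natCast_nonneg _

lemma padicValRat_sum_eq_of_lt {p : ℕ} [Fact p.Prime] {F : ℕ → ℚ} (hF : ∀ k, 0 < F k)
    {s : Finset ℕ} {i : ℕ} (hi : i ∈ s)
    (hlt : ∀ k ∈ s, k ≠ i → padicValRat p (F i) < padicValRat p (F k)) :
    padicValRat p (∑ k ∈ s, F k) = padicValRat p (F i) := by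
  rw [← Finset.add_sum_erase s F hi]
  rcases (s.erase i).eq_empty_or_nonempty with hempty | hne
  · rw [hempty, Finset.sum_empty, add_zero]
  · have hrest : 0 < ∑ k ∈ s.erase i, F k := Finset.sum_pos (fun k _ => hF k) hne
    refine padicValRat.add_eq_of_lt (add_pos (hF i) hrest).ne' (hF i).ne' hrest.ne' ?_
    exact padicValRat.lt_sum_of_lt hne
      (fun k hk => hlt k (Finset.mem_of_mem_erase hk) (Finset.ne_of_mem_erase hk)) hF

lemma padicValRat_sum_P_zpow (h : ℕ → ℕ) {i j : ℕ} (hhi : 1 ≤ h i) (hij : i ≤ j) :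
    padicValRat (P i) (∑ k ∈ Finset.range (j + 1), (P k : ℚ) ^ (-(h k : ℤ))) = -(h i : ℤ) := by
  have := Fact.mk (P_prime i)
  have hP_pos (k : ℕ) : 0 < (P k : ℚ) ^ (-(h k : ℤ)) :=
    zpow_pos (Nat.cast_pos.mpr (P_prime k).pos) _
  have hi : i ∈ Finset.range (j + 1) := Finset.mem_range.mpr (Nat.lt_succ_of_le hij)
  rw [padicValRat_sum_eq_of_lt hP_pos hi, padicValRat.zpow, padicValRat_P_self, mul_one]
  intro k _ hki
  rw [padicValRat.zpow, padicValRat.zpow, padicValRat_P_self, padicValRat_P_of_ne hki]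
  omega

theorem alpha_j_infinite_expansion_general
    (h : ℕ → ℕ) (hpos : ∀ i, 1 ≤ h i)
    (j b : ℕ) (i : ℕ) (hij : i ≤ j) (hndvd : ¬ P i ∣ b) :
    ∀ n : ℕ, ¬ ∃ z : ℤ,
      (b : ℚ) ^ n * (∑ i ∈ Finset.range (j + 1), (P i : ℚ) ^ (-(h i : ℤ))) = z := by
  rintro n ⟨z, hz⟩
  have := Fact.mk (P_prime i)
  have hb : (b : ℚ) ≠ 0 := Nat.cast_ne_zero.mpr (by rintro rfl; exact hndvd (dvd_zero _))
  have hhi := hpos i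
  have hα := padicValRat_sum_P_zpow h hhi hij
  have hα_ne : ∑ k ∈ Finset.range (j + 1), (P k : ℚ) ^ (-(h k : ℤ)) ≠ 0 := by
    intro h0
    rw [h0, padicValRat.zero] at hα
    omega
  have hval := padicValRat_intCast_nonneg (P i) z
  rw [← hz, padicValRat.mul (pow_ne_zero n hb) hα_ne, padicValRat.pow, padicValRat.of_nat,
    padicValNat.eq_zero_of_not_dvd hndvd, hα] at hval
  omega

/-- If some `P i` with `i ≤ j` does not divide the base `b`, then
`α_j = Σ_{i=0}^j P_i^(-h(i))` has no finite base-`b` expansion: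
`b^n · α_j` is never an integer. -/
theorem alpha_j_infinite_expansion
    (h : ℕ → ℕ) (hmono : StrictMono h) (hpos : ∀ i, 1 ≤ h i)
    (j b : ℕ) (hb : 2 ≤ b) (i : ℕ) (hij : i ≤ j) (hndvd : ¬ P i ∣ b) :
    ∀ n : ℕ, ¬ ∃ z : ℤ,
      (b : ℚ) ^ n * (∑ i ∈ Finset.range (j + 1), (P i : ℚ) ^ (-(h i : ℤ))) = z :=
  alpha_j_infinite_expansion_general h hpos j b i hij hndvd
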